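/- In a finite undirected weighted graph with nonnegative weights, for a fixed vertex s, the family of minimal minimum s-v cuts {C_{sv} : v ≠ s} is laminar: for any distinct u, v ≠ s, the sets C_{su} and C_{sv} are either disjoint or one contains the other. -/

import Mathlib

/-!
The cut function is submodular, and for symmetric weights also posimodular
(`δ(A \ B) + δ(B \ A) ≤ δ(A) + δ(B)`), since `δ(Uᶜ) = δ(U)`. If `u ∈ C_{sv}`, then
`C_{su} ∩ C_{sv}` is an `s`-`u` cut and `C_{su} ∪ C_{sv}` an `s`-`v` cut, so submodularity makes
`C_{su} ∩ C_{sv}` a minimum `s`-`u` cut, and minimality gives `C_{su} ⊆ C_{sv}`. If neither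
`u ∈ C_{sv}` nor `v ∈ C_{su}`, the same argument with the differences and posimodularity makes
`C_{su} \ C_{sv}` a minimum `s`-`u` cut, so the two cuts are disjoint.
-/

open Finset

variable {V : Type*} [Fintype V] [DecidableEq V]

noncomputable section

/-- Cost of the cut `U`: total weight of edges crossing between `U` and its complement. -/
def cutCost (w : V → V → ℝ) (U : Finset V) : ℝ :=
  ∑ u ∈ U, ∑ v ∈ Uᶜ, w u v

/-- `U` is an `S`-`T` cut: `T ⊆ U ⊆ V − S`. -/
def IsCut (S T U : Finset V) : Prop := T ⊆ U ∧ Disjoint U S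

/-- Minimum cost of an `S`-`T` cut. -/
def minCutCost (w : V → V → ℝ) (S T : Finset V) : ℝ :=
  sInf (cutCost w '' {U : Finset V | IsCut S T U})

/-- `U` is a minimum `S`-`T` cut. -/
def IsMinCut (w : V → V → ℝ) (S T U : Finset V) : Prop :=
  IsCut S T U ∧ cutCost w U = minCutCost w S T

theorem cutCost_eq_sum_ite (w : V → V → ℝ) (U : Finset V) :
    cutCost w U = ∑ x, ∑ y, if x ∈ U ∧ y ∉ U then w x y else 0 := by
  simp only [cutCost, ← mem_compl, ite_and, sum_ite_irrel, sum_ite_mem, univ_inter, sum_const_zero]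

theorem cutCost_inter_add_cutCost_union_le {w : V → V → ℝ} (hw : ∀ x y, 0 ≤ w x y)
    (A B : Finset V) :
    cutCost w (A ∩ B) + cutCost w (A ∪ B) ≤ cutCost w A + cutCost w B := by
  simp only [cutCost_eq_sum_ite, ← sum_add_distrib]
  refine sum_le_sum fun x _ => sum_le_sum fun y _ => ?_
  have hxy := hw x y
  by_cases hxA : x ∈ A <;> by_cases hxB : x ∈ B <;> by_cases hyA : y ∈ A <;>
    by_cases hyB : y ∈ B <;> simp [hxA, hxB, hyA, hyB, hxy]

theorem cutCost_compl {w : V → V → ℝ} (hsym : ∀ x y, w x y = w y x) (U : Finset V) :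
    cutCost w Uᶜ = cutCost w U := by
  rw [cutCost, compl_compl, sum_comm, cutCost]
  simp only [hsym]

theorem cutCost_sdiff_add_cutCost_sdiff_le {w : V → V → ℝ} (hw : ∀ x y, 0 ≤ w x y)
    (hsym : ∀ x y, w x y = w y x) (A B : Finset V) :
    cutCost w (A \ B) + cutCost w (B \ A) ≤ cutCost w A + cutCost w B := by
  -- Submodularity applied to `A` and `Bᶜ`, since `A ∩ Bᶜ = A \ B` and `(A ∪ Bᶜ)ᶜ = B \ A`.
  have h := cutCost_inter_add_cutCost_union_le hw A Bᶜ
  rwa [cutCost_compl hsym, ← sdiff_eq_inter_compl, ← cutCost_compl hsym (A ∪ Bᶜ), compl_union,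
    compl_compl, inter_comm, ← sdiff_eq_inter_compl] at h

theorem minCutCost_le_cutCost (w : V → V → ℝ) {S T U : Finset V} (hU : IsCut S T U) :
    minCutCost w S T ≤ cutCost w U :=
  csInf_le (Set.toFinite _).bddBelow ⟨U, hU, rfl⟩

namespace IsMinCut

variable {w : V → V → ℝ} {S T T' C C' X : Finset V}

theorem cutCost_le (hC : IsMinCut w S T C) (hX : IsCut S T X) : cutCost w C ≤ cutCost w X :=
  hC.2.le.trans (minCutCost_le_cutCost w hX)

theorem eq_of_subset_of_cutCost_le (hC : IsMinCut w S T C)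
    (hmin : ∀ U, IsMinCut w S T U → U ⊆ C → U = C) (hX : IsCut S T X) (hXC : X ⊆ C)
    (hcost : cutCost w X ≤ cutCost w C) : X = C :=
  hmin X ⟨hX, le_antisymm (hcost.trans hC.2.le) (minCutCost_le_cutCost w hX)⟩ hXC

theorem subset_of_targets_subset (hw : ∀ x y, 0 ≤ w x y) (hC : IsMinCut w S T C)
    (hmin : ∀ U, IsMinCut w S T U → U ⊆ C → U = C) (hC' : IsMinCut w S T' C')
    (hT : T ⊆ C') : C ⊆ C' := by
  have hinter : IsCut S T (C ∩ C') := ⟨subset_inter hC.1.1 hT, hC.1.2.mono_left inter_subset_left⟩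
  have hunion : IsCut S T' (C ∪ C') :=
    ⟨hC'.1.1.trans subset_union_right, disjoint_union_left.2 ⟨hC.1.2, hC'.1.2⟩⟩
  have hsub := cutCost_inter_add_cutCost_union_le hw C C'
  have hcost : cutCost w (C ∩ C') ≤ cutCost w C := by linarith [hC'.cutCost_le hunion]
  exact inter_eq_left.1 (hC.eq_of_subset_of_cutCost_le hmin hinter inter_subset_left hcost)

theorem disjoint_of_targets_disjoint (hw : ∀ x y, 0 ≤ w x y) (hsym : ∀ x y, w x y = w y x)
    (hC : IsMinCut w S T C) (hmin : ∀ U, IsMinCut w S T U → U ⊆ C → U = C)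
    (hC' : IsMinCut w S T' C') (hT : Disjoint T C') (hT' : Disjoint T' C) : Disjoint C C' := by
  have hsdiff : IsCut S T (C \ C') :=
    ⟨subset_sdiff.2 ⟨hC.1.1, hT⟩, hC.1.2.mono_left sdiff_subset⟩
  have hsdiff' : IsCut S T' (C' \ C) :=
    ⟨subset_sdiff.2 ⟨hC'.1.1, hT'⟩, hC'.1.2.mono_left sdiff_subset⟩
  have hposi := cutCost_sdiff_add_cutCost_sdiff_le hw hsym C C'
  have hcost : cutCost w (C \ C') ≤ cutCost w C := by linarith [hC'.cutCost_le hsdiff']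
  exact sdiff_eq_self_iff_disjoint.1 (hC.eq_of_subset_of_cutCost_le hmin hsdiff sdiff_subset hcost)

end IsMinCut

theorem minimal_minCuts_laminar_general (w : V → V → ℝ) (hw : ∀ u v, 0 ≤ w u v)
    (hsym : ∀ u v, w u v = w v u)
    (s u v : V)
    (Cu Cv : Finset V)
    (hCu : IsMinCut w {s} {u} Cu)
    (hCumin : ∀ U, IsMinCut w {s} {u} U → U ⊆ Cu → U = Cu)
    (hCv : IsMinCut w {s} {v} Cv)
    (hCvmin : ∀ U, IsMinCut w {s} {v} U → U ⊆ Cv → U = Cv) :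
    Disjoint Cu Cv ∨ Cu ⊆ Cv ∨ Cv ⊆ Cu := by
  by_cases hu : u ∈ Cv
  · exact Or.inr <| Or.inl <|
      hCu.subset_of_targets_subset hw hCumin hCv (singleton_subset_iff.2 hu)
  by_cases hv : v ∈ Cu
  · exact Or.inr <| Or.inr <|
      hCv.subset_of_targets_subset hw hCvmin hCu (singleton_subset_iff.2 hv)
  exact Or.inl <| hCu.disjoint_of_targets_disjoint hw hsym hCumin hCv
    (disjoint_singleton_left.2 hu) (disjoint_singleton_left.2 hv)

/-- For a fixed source `s`, the family of minimal minimum `s`-`v` cuts is laminar. -/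
theorem minimal_minCuts_laminar (w : V → V → ℝ) (hw : ∀ u v, 0 ≤ w u v)
    (hsym : ∀ u v, w u v = w v u)
    (s u v : V) (hu : u ≠ s) (hv : v ≠ s) (huv : u ≠ v)
    (Cu Cv : Finset V)
    (hCu : IsMinCut w {s} {u} Cu)
    (hCumin : ∀ U, IsMinCut w {s} {u} U → U ⊆ Cu → U = Cu)
    (hCv : IsMinCut w {s} {v} Cv)
    (hCvmin : ∀ U, IsMinCut w {s} {v} U → U ⊆ Cv → U = Cv) :
    Disjoint Cu Cv ∨ Cu ⊆ Cv ∨ Cv ⊆ Cu :=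
  minimal_minCuts_laminar_general w hw hsym s u v Cu Cv hCu hCumin hCv hCvmin
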